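/- arXiv:2104.12762 — 7 statements merged into one kernel-verified Lean document; each statement's English description precedes it below -/
import Mathlib

section
/- Let k1, k2, f_c > 0, let χ ∈ (0,1), let γ, ψ, α, β, φ be real exponents, and set a1 = γ − αψ, a2 = 1 − αβ, a4 = αφ with a2 ≠ 0 and a1 ≠ a2. Define D_c(P) = (k1 · k2^α · P^{−a1} · χ^{a4})^{1/a2} and π_i(P) = (P·(1−χ) − f_c) · D_c(P) for P > 0, and let P* = a1·f_c / ((a1 − a2)·(1 − χ)). If a1/(a1 − a2) > 0 (so that P* > 0), then the derivative of π_i vanishes at P*: π_i'(P*) = 0. -/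
/-!
With constant-elasticity demand the payoff is `(Q m - c) · K Q^e` with `e = -a₁/a₂`. Its
derivative is `K P^(e-1) (P m (1 + e) - c e)`, and `P*` is exactly the root of the
bracket: the markup rule `P m = c e / (1 + e) = c a₁ / (a₁ - a₂)`.
-/

open Real Filter

theorem hasDerivAt_sub_mul_mul_rpow {m c K e P : ℝ} (hP : 0 < P) :
    HasDerivAt (fun Q : ℝ => (Q * m - c) * (K * Q ^ e))
      (K * P ^ (e - 1) * (P * m * (1 + e) - c * e)) P := by
  have hprice : HasDerivAt (fun Q : ℝ => Q * m - c) m P := by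
    simpa using ((hasDerivAt_id P).mul_const m).sub_const c
  have hdemand : HasDerivAt (fun Q : ℝ => K * Q ^ e) (K * (e * P ^ (e - 1))) P :=
    (hasDerivAt_rpow_const (Or.inl hP.ne')).const_mul K
  refine (hprice.mul hdemand).congr_deriv ?_
  rw [rpow_sub_one hP.ne']
  field_simp
  ring

theorem mul_rpow_rpow_of_nonneg {C Q : ℝ} (hC : 0 ≤ C) (hQ : 0 ≤ Q) (a b : ℝ) :
    (C * Q ^ a) ^ b = C ^ b * Q ^ (a * b) := by
  rw [mul_rpow hC (rpow_nonneg hQ a), ← rpow_mul hQ]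

theorem stmt_4_general (k1 k2 fc χ α a1 a2 a4 : ℝ)
    (hk1 : 0 < k1) (hk2 : 0 < k2) (hfc : 0 < fc) (hχ : χ ∈ Set.Ioo (0 : ℝ) 1)
    (ha2ne : a2 ≠ 0)
    (hpos : 0 < a1 / (a1 - a2)) :
    HasDerivAt
      (fun Q : ℝ => (Q * (1 - χ) - fc) * (k1 * k2 ^ α * Q ^ (-a1) * χ ^ a4) ^ (1 / a2))
      0 (a1 * fc / ((a1 - a2) * (1 - χ))) := by
  obtain ⟨hχ0, hχ1⟩ := hχ
  have h1χ : 0 < 1 - χ := sub_pos.mpr hχ1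
  have hda : a1 - a2 ≠ 0 := fun h => by simp [h] at hpos
  set P := a1 * fc / ((a1 - a2) * (1 - χ)) with hPdef
  have hP : 0 < P := by
    rw [hPdef, ← div_mul_div_comm]
    exact mul_pos hpos (div_pos hfc h1χ)
  set C := k1 * k2 ^ α * χ ^ a4
  have hC : 0 ≤ C := by positivity
  have hmarkup : P * (1 - χ) * (1 + -a1 / a2) = fc * (-a1 / a2) := by
    rw [hPdef]
    field_simp
    ring
  have hderiv := hasDerivAt_sub_mul_mul_rpow (m := 1 - χ) (c := fc) (K := C ^ (1 / a2))
    (e := -a1 / a2) hP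
  rw [hmarkup, sub_self, mul_zero] at hderiv
  refine hderiv.congr_of_eventuallyEq ?_
  filter_upwards [Ioi_mem_nhds hP] with Q hQ
  rw [show k1 * k2 ^ α * Q ^ (-a1) * χ ^ a4 = C * Q ^ (-a1) by ring,
    mul_rpow_rpow_of_nonneg hC (le_of_lt hQ), neg_mul, one_div, ← div_eq_mul_inv, neg_div]

/-- the derivative of the service provider payoff vanishes at the
candidate best-response price P* = a1·f_c/((a1 − a2)·(1 − χ)). -/
theorem stmt_4 (k1 k2 fc χ γ ψ α β φ a1 a2 a4 : ℝ)
    (hk1 : 0 < k1) (hk2 : 0 < k2) (hfc : 0 < fc) (hχ : χ ∈ Set.Ioo (0 : ℝ) 1)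
    (ha1 : a1 = γ - α * ψ) (ha2 : a2 = 1 - α * β) (ha4 : a4 = α * φ)
    (ha2ne : a2 ≠ 0) (ha1a2 : a1 ≠ a2)
    (hpos : 0 < a1 / (a1 - a2)) :
    HasDerivAt
      (fun Q : ℝ => (Q * (1 - χ) - fc) * (k1 * k2 ^ α * Q ^ (-a1) * χ ^ a4) ^ (1 / a2))
      0 (a1 * fc / ((a1 - a2) * (1 - χ))) :=
  stmt_4_general k1 k2 fc χ α a1 a2 a4 hk1 hk2 hfc hχ ha2ne hpos
end

section
/- Let k1, k2, f_c > 0, let χ ∈ (0,1), let γ, ψ, α, β, φ be real exponents, and set a1 = γ − αψ, a2 = 1 − αβ, a4 = αφ with a2 ≠ 0 and a1/(a1 − a2) > 0. Define D_c(P) = (k1 · k2^α · P^{−a1} · χ^{a4})^{1/a2}, π_i(P) = (P·(1−χ) − f_c) · D_c(P) for P > 0, and P* = a1·f_c / ((a1 − a2)·(1 − χ)). Then the second derivative of π_i at P* equals (D_c(P*)/P*) · (1 − a1/a2) · (1 − χ); in particular π_i''(P*) < 0 if and only if a1/a2 > 1. -/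
/-!
For `Q > 0` the demand is a constant-elasticity curve `D(Q) = K Q^(-b)` with `b = a1/a2`, so the
payoff is `(c Q - f) K Q^(-b)` with `c = 1 - χ`. Differentiating twice gives
`π''(Q) = K b Q^(-b-2) ((b - 1) c Q - (b + 1) f)`, and `P*` is exactly the point where
`f b = P* c (b - 1)` (the first-order condition). Substituting it collapses `π''(P*)` to
`D(P*)/P* · (1 - b) · c`, whose sign is that of `1 - b`.
-/

open Filter Topology

namespace ConstElasticityPayoff

variable (c f K b : ℝ)

theorem hasDerivAt {Q : ℝ} (hQ : 0 < Q) :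
    HasDerivAt (fun x => (x * c - f) * (K * x ^ (-b)))
      (K * (c * Q ^ (-b) - b * (Q * c - f) * Q ^ (-b - 1))) Q := by
  have hrpow := (Real.hasDerivAt_rpow_const (p := -b) (Or.inl hQ.ne')).const_mul K
  exact ((((hasDerivAt_id' Q).mul_const c).sub_const f).mul hrpow).congr_deriv (by ring)

theorem deriv_eventuallyEq {Q : ℝ} (hQ : 0 < Q) :
    deriv (fun x => (x * c - f) * (K * x ^ (-b))) =ᶠ[𝓝 Q]
      fun x => K * (c * x ^ (-b) - b * (x * c - f) * x ^ (-b - 1)) := by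
  filter_upwards [Ioi_mem_nhds hQ] with x hx
  exact (hasDerivAt c f K b hx).deriv

theorem deriv_deriv {Q : ℝ} (hQ : 0 < Q) :
    deriv (deriv fun x => (x * c - f) * (K * x ^ (-b))) Q =
      K * b * Q ^ (-b - 2) * ((b - 1) * c * Q - (b + 1) * f) := by
  rw [(deriv_eventuallyEq c f K b hQ).deriv_eq]
  have h0 := Real.hasDerivAt_rpow_const (p := -b) (Or.inl hQ.ne')
  have h1 := Real.hasDerivAt_rpow_const (p := -b - 1) (Or.inl hQ.ne')
  have hlin : HasDerivAt (fun x => x * c - f) c Q := by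
    simpa using ((hasDerivAt_id' Q).mul_const c).sub_const f
  refine (((h0.const_mul c).sub ((hlin.const_mul b).mul h1)).const_mul K).deriv.trans ?_
  have hpow₀ : Q ^ (-b - 1) = Q ^ (-b - 2) * Q := by
    rw [← Real.rpow_add_one hQ.ne']; ring_nf
  have hpow₁ : Q ^ (-b - 1 - 1) = Q ^ (-b - 2) := by ring_nf
  rw [hpow₁, hpow₀]
  ring

theorem deriv_deriv_of_foc {Q : ℝ} (hQ : 0 < Q) (hfoc : f * b = Q * c * (b - 1)) :
    deriv (deriv fun x => (x * c - f) * (K * x ^ (-b))) Q = K * Q ^ (-b) / Q * (1 - b) * c := by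
  have hpow : Q ^ (-b) = Q ^ (-b - 2) * Q * Q := by
    rw [← Real.rpow_add_one hQ.ne', ← Real.rpow_add_one hQ.ne']; ring_nf
  rw [deriv_deriv c f K b hQ, hpow, mul_div_assoc, mul_div_cancel_right₀ _ hQ.ne']
  linear_combination (-(K * (b + 1) * Q ^ (-b - 2))) * hfoc

end ConstElasticityPayoff

theorem stmt_5_general (k1 k2 fc χ α a1 a2 a4 : ℝ)
    (hk1 : 0 < k1) (hk2 : 0 < k2) (hfc : 0 < fc) (hχ : χ ∈ Set.Ioo (0 : ℝ) 1)
    (ha2ne : a2 ≠ 0) (hpos : 0 < a1 / (a1 - a2)) :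
    let Pstar : ℝ := a1 * fc / ((a1 - a2) * (1 - χ))
    let Dc : ℝ → ℝ := fun Q => (k1 * k2 ^ α * Q ^ (-a1) * χ ^ a4) ^ (1 / a2)
    let pi_i : ℝ → ℝ := fun Q => (Q * (1 - χ) - fc) * Dc Q
    deriv (deriv pi_i) Pstar = Dc Pstar / Pstar * (1 - a1 / a2) * (1 - χ) ∧
      (deriv (deriv pi_i) Pstar < 0 ↔ 1 < a1 / a2) := by
  obtain ⟨hχ0, hχ1⟩ := hχ
  intro Pstar Dc pi_i
  have hc : 0 < 1 - χ := by linarith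
  have hP : 0 < Pstar := by
    rw [show Pstar = a1 / (a1 - a2) * (fc / (1 - χ)) from (div_mul_div_comm ..).symm]
    positivity
  set K := (k1 * k2 ^ α * χ ^ a4) ^ (1 / a2)
  have hDc : ∀ Q, 0 < Q → Dc Q = K * Q ^ (-(a1 / a2)) := fun Q hQ => by
    simp only [Dc, K, show k1 * k2 ^ α * Q ^ (-a1) * χ ^ a4 = k1 * k2 ^ α * χ ^ a4 * Q ^ (-a1) by ring]
    rw [Real.mul_rpow (by positivity) (by positivity), ← Real.rpow_mul hQ.le]
    ring_nf
  have hpi : pi_i =ᶠ[𝓝 Pstar] fun x => (x * (1 - χ) - fc) * (K * x ^ (-(a1 / a2))) := by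
    filter_upwards [Ioi_mem_nhds hP] with x hx
    simp only [pi_i, hDc x hx]
  have hdiff : a1 - a2 ≠ 0 := fun h => by simp [h] at hpos
  have hfoc : fc * (a1 / a2) = Pstar * (1 - χ) * (a1 / a2 - 1) := by
    simp only [Pstar]
    field_simp
  have hEq : deriv (deriv pi_i) Pstar = Dc Pstar / Pstar * (1 - a1 / a2) * (1 - χ) := by
    rw [hpi.deriv.deriv_eq, ConstElasticityPayoff.deriv_deriv_of_foc _ _ _ _ hP hfoc, hDc _ hP]
  have hscale : 0 < Dc Pstar / Pstar * (1 - χ) := by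
    rw [hDc _ hP]
    positivity
  refine ⟨hEq, ?_⟩
  rw [hEq]
  constructor <;> intro h <;> nlinarith

/-- the second derivative of the service provider payoff at
P* equals (D_c(P*)/P*)·(1 − a1/a2)·(1 − χ); in particular it is negative iff
a1/a2 > 1. -/
theorem stmt_5 (k1 k2 fc χ γ ψ α β φ a1 a2 a4 : ℝ)
    (hk1 : 0 < k1) (hk2 : 0 < k2) (hfc : 0 < fc) (hχ : χ ∈ Set.Ioo (0 : ℝ) 1)
    (ha1 : a1 = γ - α * ψ) (ha2 : a2 = 1 - α * β) (ha4 : a4 = α * φ)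
    (ha2ne : a2 ≠ 0) (hpos : 0 < a1 / (a1 - a2)) :
    let Pstar : ℝ := a1 * fc / ((a1 - a2) * (1 - χ))
    let Dc : ℝ → ℝ := fun Q => (k1 * k2 ^ α * Q ^ (-a1) * χ ^ a4) ^ (1 / a2)
    let pi_i : ℝ → ℝ := fun Q => (Q * (1 - χ) - fc) * Dc Q
    deriv (deriv pi_i) Pstar = Dc Pstar / Pstar * (1 - a1 / a2) * (1 - χ) ∧
      (deriv (deriv pi_i) Pstar < 0 ↔ 1 < a1 / a2) :=
  stmt_5_general k1 k2 fc χ α a1 a2 a4 hk1 hk2 hfc hχ ha2ne hpos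
end

section
/- Let k1, k2, f_c > 0, let χ ∈ (0,1), let γ, ψ, α, β, φ be real exponents, and set a1 = γ − αψ, a2 = 1 − αβ, a4 = αφ. Assume a2 > 0 and a1 > a2 (so in particular a1/a2 > 1 and a1/(a1 − a2) > 0). Define D_c(P) = (k1 · k2^α · P^{−a1} · χ^{a4})^{1/a2}, π_i(P) = (P·(1−χ) − f_c) · D_c(P) for P > 0, and P* = a1·f_c / ((a1 − a2)·(1 − χ)). Then P* is the unique global maximizer of π_i on (0, ∞): for every P > 0 with P ≠ P*, π_i(P) < π_i(P*). -/
/-!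
Pulling the constant factor out of the demand, the payoff is `C · ((1 - χ) P - f_c) · P ^ (-r)`
with `C > 0` and `r = a1 / a2 > 1`, and `P*` is the root of the first-order condition
`(r - 1) (1 - χ) P* = r f_c`. Writing `P = t P*`, this condition turns the margin into
`(1 - χ) P - f_c = ((1 - χ) P* - f_c) (1 + r (t - 1))`, and Bernoulli's inequality
`1 + r (t - 1) < t ^ r` for `t ≠ 1` gives the strict maximum.
-/

open Real

theorem mul_sub_mul_rpow_neg_lt {r c f P Q : ℝ} (hr : 1 < r) (hf : 0 < f) (hQ : 0 < Q)
    (hfoc : (r - 1) * (c * Q) = r * f) (hP : 0 < P) (hne : P ≠ Q) :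
    (c * P - f) * P ^ (-r) < (c * Q - f) * Q ^ (-r) := by
  set t := P / Q with ht
  have htpos : 0 < t := div_pos hP hQ
  have hPt : P = t * Q := (div_mul_cancel₀ P hQ.ne').symm
  have ht1 : t ≠ 1 := fun h => hne (by rw [hPt, h, one_mul])
  have hmargin : 0 < c * Q - f := by nlinarith
  have hlinear : c * P - f = (c * Q - f) * (1 + r * (t - 1)) := by
    rw [hPt]; linear_combination (1 - t) * hfoc
  have hbernoulli : 1 + r * (t - 1) < t ^ r := by
    simpa using one_add_mul_self_lt_rpow_one_add (s := t - 1) (by linarith)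
      (sub_ne_zero.mpr ht1) hr
  have hpow : t ^ r * t ^ (-r) = 1 := by
    rw [← rpow_add htpos, add_neg_cancel, rpow_zero]
  calc (c * P - f) * P ^ (-r)
      = (c * Q - f) * (1 + r * (t - 1)) * t ^ (-r) * Q ^ (-r) := by
        rw [hlinear, hPt, mul_rpow htpos.le hQ.le]; ring
    _ < (c * Q - f) * t ^ r * t ^ (-r) * Q ^ (-r) := by gcongr
    _ = (c * Q - f) * Q ^ (-r) := by rw [mul_assoc _ (t ^ r), hpow, mul_one]

theorem stmt_6_general (k1 k2 fc χ α a1 a2 a4 : ℝ)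
    (hk1 : 0 < k1) (hk2 : 0 < k2) (hfc : 0 < fc) (hχ : χ ∈ Set.Ioo (0 : ℝ) 1)
    (ha2pos : 0 < a2) (ha1a2 : a2 < a1) :
    let Pstar : ℝ := a1 * fc / ((a1 - a2) * (1 - χ))
    let pi_i : ℝ → ℝ :=
      fun Q => (Q * (1 - χ) - fc) * (k1 * k2 ^ α * Q ^ (-a1) * χ ^ a4) ^ (1 / a2)
    ∀ P : ℝ, 0 < P → P ≠ Pstar → pi_i P < pi_i Pstar := by
  intro Pstar pi_i P hP hne
  obtain ⟨hχ0, hχ1⟩ := hχ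
  have hd : 0 < a1 - a2 := by linarith
  set C := (k1 * k2 ^ α * χ ^ a4) ^ (1 / a2)
  have hC : 0 < C := by positivity
  have hpayoff : ∀ Q, 0 < Q → pi_i Q = C * (((1 - χ) * Q - fc) * Q ^ (-(a1 / a2))) := by
    intro Q hQ
    simp only [pi_i, C]
    rw [mul_right_comm _ (Q ^ (-a1)), mul_rpow (by positivity) (by positivity),
      ← rpow_mul hQ.le, neg_mul, one_div, ← div_eq_mul_inv]
    ring
  have ha1 : 0 < a1 := ha2pos.trans ha1a2
  have hPstar : 0 < Pstar := by simp only [Pstar]; positivity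
  have hfoc : (a1 / a2 - 1) * ((1 - χ) * Pstar) = a1 / a2 * fc := by
    simp only [Pstar]; field_simp
  rw [hpayoff P hP, hpayoff Pstar hPstar]
  exact mul_lt_mul_of_pos_left (mul_sub_mul_rpow_neg_lt ((one_lt_div ha2pos).2 ha1a2)
    hfc hPstar hfoc hP hne) hC

/-- under a2 > 0 and a1 > a2, the price
P* = a1·f_c/((a1 − a2)·(1 − χ)) is the unique global maximizer of the service
provider payoff on (0, ∞). -/
theorem stmt_6 (k1 k2 fc χ γ ψ α β φ a1 a2 a4 : ℝ)
    (hk1 : 0 < k1) (hk2 : 0 < k2) (hfc : 0 < fc) (hχ : χ ∈ Set.Ioo (0 : ℝ) 1)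
    (ha1 : a1 = γ - α * ψ) (ha2 : a2 = 1 - α * β) (ha4 : a4 = α * φ)
    (ha2pos : 0 < a2) (ha1a2 : a2 < a1) :
    let Pstar : ℝ := a1 * fc / ((a1 - a2) * (1 - χ))
    let pi_i : ℝ → ℝ :=
      fun Q => (Q * (1 - χ) - fc) * (k1 * k2 ^ α * Q ^ (-a1) * χ ^ a4) ^ (1 / a2)
    ∀ P : ℝ, 0 < P → P ≠ Pstar → pi_i P < pi_i Pstar :=
  stmt_6_general k1 k2 fc χ α a1 a2 a4 hk1 hk2 hfc hχ ha2pos ha1a2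
end

section
/- Let k1, k2, f_c > 0, let χ ∈ (0,1), let γ, ψ, α, β, φ be real exponents, and set a1 = γ − αψ, a2 = 1 − αβ, a4 = αφ. Assume a2 > 0 and a1 > a2. Define D_c(P) = (k1 · k2^α · P^{−a1} · χ^{a4})^{1/a2}, π_i(P) = (P·(1−χ) − f_c) · D_c(P) for P > 0, and P* = a1·f_c / ((a1 − a2)·(1 − χ)). Then π_i is strictly monotone increasing on the interval (0, P*] and strictly monotone decreasing on the interval [P*, ∞). -/
/-!
On `x > 0` the payoff is `(x c - f) · C x^{-s}` with `c = 1 - χ`,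
`C = (k1 k2^α χ^{a4})^{1/a2} > 0` and `s = a1 / a2 > 1`. Its derivative is
`C x^{-s-1} (s f - (s - 1) c x)`, whose sign is that of the affine factor, which vanishes
exactly at `s f / ((s - 1) c) = P*`.
-/

open Set

section LinearTimesPower

theorem hasDerivAt_sub_mul_mul_rpow_neg {x : ℝ} (hx : 0 < x) (c f C s : ℝ) :
    HasDerivAt (fun x => (x * c - f) * (C * x ^ (-s)))
      (C * x ^ (-s - 1) * (s * f - (s - 1) * c * x)) x := by
  have hlin : HasDerivAt (fun x : ℝ => x * c - f) c x := by
    simpa using ((hasDerivAt_id x).mul_const c).sub_const f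
  have hpow : HasDerivAt (fun x : ℝ => C * x ^ (-s)) (C * (-s * x ^ (-s - 1))) x :=
    (Real.hasDerivAt_rpow_const (Or.inl hx.ne')).const_mul C
  refine (hlin.mul hpow).congr_deriv ?_
  have hsplit : x ^ (-s) = x ^ (-s - 1) * x := by
    rw [← Real.rpow_add_one hx.ne', sub_add_cancel]
  rw [hsplit]
  ring

variable {c f C s : ℝ}

theorem strictMonoOn_sub_mul_mul_rpow_neg (hc : 0 < c) (hC : 0 < C) (hs : 1 < s) :
    StrictMonoOn (fun x => (x * c - f) * (C * x ^ (-s))) (Ioc 0 (s * f / ((s - 1) * c))) := by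
  have hsc : 0 < (s - 1) * c := mul_pos (by linarith) hc
  refine strictMonoOn_of_hasDerivWithinAt_pos (convex_Ioc _ _)
    (fun x hx => (hasDerivAt_sub_mul_mul_rpow_neg hx.1 c f C s).continuousAt.continuousWithinAt)
    (fun x hx => (hasDerivAt_sub_mul_mul_rpow_neg (interior_subset hx).1 c f C s).hasDerivWithinAt)
    fun x hx => ?_
  rw [interior_Ioc] at hx
  have hlt : (s - 1) * c * x < s * f := by
    have := (lt_div_iff₀ hsc).mp hx.2
    linarith
  exact mul_pos (mul_pos hC (Real.rpow_pos_of_pos hx.1 _)) (by linarith)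

theorem strictAntiOn_sub_mul_mul_rpow_neg (hc : 0 < c) (hf : 0 < f) (hC : 0 < C) (hs : 1 < s) :
    StrictAntiOn (fun x => (x * c - f) * (C * x ^ (-s))) (Ici (s * f / ((s - 1) * c))) := by
  have hsc : 0 < (s - 1) * c := mul_pos (by linarith) hc
  have hpos : ∀ x ∈ Ici (s * f / ((s - 1) * c)), 0 < x := fun x hx =>
    (div_pos (mul_pos (by linarith) hf) hsc).trans_le hx
  refine strictAntiOn_of_hasDerivWithinAt_neg (convex_Ici _)
    (fun x hx =>
      (hasDerivAt_sub_mul_mul_rpow_neg (hpos x hx) c f C s).continuousAt.continuousWithinAt)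
    (fun x hx =>
      (hasDerivAt_sub_mul_mul_rpow_neg (hpos x (interior_subset hx)) c f C s).hasDerivWithinAt)
    fun x hx => ?_
  have hx0 := hpos x (interior_subset hx)
  rw [interior_Ici] at hx
  have hgt : s * f < (s - 1) * c * x := by
    have := (div_lt_iff₀ hsc).mp hx
    linarith
  exact mul_neg_of_pos_of_neg (mul_pos hC (Real.rpow_pos_of_pos hx0 _)) (by linarith)

end LinearTimesPower

theorem stmt_7_general (k1 k2 fc χ α a1 a2 a4 : ℝ)
    (hk1 : 0 < k1) (hk2 : 0 < k2) (hfc : 0 < fc) (hχ : χ ∈ Set.Ioo (0 : ℝ) 1)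
    (ha2pos : 0 < a2) (ha1a2 : a2 < a1) :
    let Pstar : ℝ := a1 * fc / ((a1 - a2) * (1 - χ))
    let pi_i : ℝ → ℝ :=
      fun Q => (Q * (1 - χ) - fc) * (k1 * k2 ^ α * Q ^ (-a1) * χ ^ a4) ^ (1 / a2)
    StrictMonoOn pi_i (Set.Ioc 0 Pstar) ∧ StrictAntiOn pi_i (Set.Ici Pstar) := by
  intro Pstar pi_i
  obtain ⟨hχ0, hχ1⟩ := hχ
  have hK : 0 < k1 * k2 ^ α * χ ^ a4 := by positivity
  have hs : 1 < a1 / a2 := (one_lt_div ha2pos).mpr ha1a2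
  have hPstar : Pstar = a1 / a2 * fc / ((a1 / a2 - 1) * (1 - χ)) := by
    have : a1 - a2 ≠ 0 := sub_ne_zero.mpr ha1a2.ne'
    simp only [Pstar]
    field_simp
  have hpi : EqOn
      (fun x => (x * (1 - χ) - fc) * ((k1 * k2 ^ α * χ ^ a4) ^ (1 / a2) * x ^ (-(a1 / a2))))
      pi_i (Ioi 0) := fun x (hx : 0 < x) => by
    simp only [pi_i]
    rw [mul_right_comm _ (x ^ (-a1)), Real.mul_rpow hK.le (Real.rpow_nonneg hx.le _),
      ← Real.rpow_mul hx.le, neg_mul, one_div, div_eq_mul_inv]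
  have hPpos : 0 < Pstar :=
    div_pos (mul_pos (ha2pos.trans ha1a2) hfc) (mul_pos (sub_pos.mpr ha1a2) (sub_pos.mpr hχ1))
  rw [hPstar] at hPpos ⊢
  exact ⟨(strictMonoOn_sub_mul_mul_rpow_neg (sub_pos.mpr hχ1) (by positivity) hs).congr
      (hpi.mono fun x hx => hx.1),
    (strictAntiOn_sub_mul_mul_rpow_neg (sub_pos.mpr hχ1) hfc (by positivity) hs).congr
      (hpi.mono fun x (hx : _ ≤ x) => hPpos.trans_le hx)⟩

/-- under a2 > 0 and a1 > a2, the service provider payoff is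
strictly increasing on (0, P*] and strictly decreasing on [P*, ∞). -/
theorem stmt_7 (k1 k2 fc χ γ ψ α β φ a1 a2 a4 : ℝ)
    (hk1 : 0 < k1) (hk2 : 0 < k2) (hfc : 0 < fc) (hχ : χ ∈ Set.Ioo (0 : ℝ) 1)
    (ha1 : a1 = γ - α * ψ) (ha2 : a2 = 1 - α * β) (ha4 : a4 = α * φ)
    (ha2pos : 0 < a2) (ha1a2 : a2 < a1) :
    let Pstar : ℝ := a1 * fc / ((a1 - a2) * (1 - χ))
    let pi_i : ℝ → ℝ :=
      fun Q => (Q * (1 - χ) - fc) * (k1 * k2 ^ α * Q ^ (-a1) * χ ^ a4) ^ (1 / a2)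
    StrictMonoOn pi_i (Set.Ioc 0 Pstar) ∧ StrictAntiOn pi_i (Set.Ici Pstar) :=
  stmt_7_general k1 k2 fc χ α a1 a2 a4 hk1 hk2 hfc hχ ha2pos ha1a2
end

section
/- Let k1, k2, f_s, φ > 0, let γ, ψ, α, β be real exponents, and set a1 = γ − αψ, a2 = 1 − αβ, a3 = ψ − γβ, a4 = αφ with a2 ≠ 0 and a4 + a2 ≠ 0. Fix P > 0 and define the cloud payoff as a function of χ > 0 by π(χ) = (k1·k2^α)^{1/a2} · P^{1 − a1/a2} · χ^{a4/a2 + 1} − f_s · (k2·k1^β)^{1/a2} · P^{a3/a2} · χ^{φ/a2}. Then for χ > 0, the derivative of π vanishes at χ if and only if χ^{(a4 − φ)/a2 + 1} = f_s · (φ/(a4 + a2)) · ((k2·k1^β)/(k1·k2^α))^{1/a2} · P^{(a1 + a3)/a2 − 1}. -/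
open Real

/-- Writing `x ^ (p - 1) = x ^ (p - q) * x ^ (q - 1)`, the derivative factors as
`(A * p * x ^ (p - q) - B * q) * x ^ (q - 1)` with a positive second factor. -/
theorem deriv_mul_rpow_sub_mul_rpow_eq_zero_iff {A B p q x : ℝ} (hx : 0 < x)
    (hAp : A * p ≠ 0) :
    deriv (fun y : ℝ => A * y ^ p - B * y ^ q) x = 0 ↔ x ^ (p - q) = B * q / (A * p) := by
  have hderiv : HasDerivAt (fun y : ℝ => A * y ^ p - B * y ^ q)
      (A * (p * x ^ (p - 1)) - B * (q * x ^ (q - 1))) x :=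
    ((hasDerivAt_rpow_const (Or.inl hx.ne')).const_mul A).sub
      ((hasDerivAt_rpow_const (Or.inl hx.ne')).const_mul B)
  have hsplit : x ^ (p - 1) = x ^ (p - q) * x ^ (q - 1) := by
    rw [← rpow_add hx]
    ring_nf
  have hfactor : A * (p * x ^ (p - 1)) - B * (q * x ^ (q - 1)) =
      (x ^ (p - q) * (A * p) - B * q) * x ^ (q - 1) := by
    rw [hsplit]
    ring
  rw [hderiv.deriv, hfactor, mul_eq_zero, or_iff_left (rpow_pos_of_pos hx _).ne',
    sub_eq_zero, eq_div_iff hAp]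

theorem stmt_9_general (k1 k2 fs φ P α β a1 a2 a3 a4 : ℝ)
    (hk1 : 0 < k1) (hk2 : 0 < k2) (hP : 0 < P)
    (ha2ne : a2 ≠ 0) (ha42 : a4 + a2 ≠ 0) :
    ∀ χ : ℝ, 0 < χ →
      (deriv
          (fun x : ℝ =>
            (k1 * k2 ^ α) ^ (1 / a2) * P ^ (1 - a1 / a2) * x ^ (a4 / a2 + 1) -
              fs * (k2 * k1 ^ β) ^ (1 / a2) * P ^ (a3 / a2) * x ^ (φ / a2)) χ = 0 ↔
        χ ^ ((a4 - φ) / a2 + 1) =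
          fs * (φ / (a4 + a2)) * ((k2 * k1 ^ β) / (k1 * k2 ^ α)) ^ (1 / a2) *
            P ^ ((a1 + a3) / a2 - 1)) := by
  intro χ hχ
  have hc : 0 < k1 * k2 ^ α := mul_pos hk1 (rpow_pos_of_pos hk2 α)
  have hd : 0 < k2 * k1 ^ β := mul_pos hk2 (rpow_pos_of_pos hk1 β)
  have hp : a4 / a2 + 1 = (a4 + a2) / a2 := by field_simp
  have hAp : (k1 * k2 ^ α) ^ (1 / a2) * P ^ (1 - a1 / a2) * (a4 / a2 + 1) ≠ 0 := by
    rw [hp]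
    exact mul_ne_zero (by positivity) (div_ne_zero ha42 ha2ne)
  have hexp : (a4 - φ) / a2 + 1 = (a4 / a2 + 1) - φ / a2 := by ring
  have hcoeff : fs * (φ / (a4 + a2)) * ((k2 * k1 ^ β) / (k1 * k2 ^ α)) ^ (1 / a2) *
      P ^ ((a1 + a3) / a2 - 1) =
      fs * (k2 * k1 ^ β) ^ (1 / a2) * P ^ (a3 / a2) * (φ / a2) /
        ((k1 * k2 ^ α) ^ (1 / a2) * P ^ (1 - a1 / a2) * (a4 / a2 + 1)) := by
    have hPexp : (a1 + a3) / a2 - 1 = a3 / a2 - (1 - a1 / a2) := by ring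
    rw [div_rpow hd.le hc.le, hPexp, rpow_sub hP, hp]
    field_simp
  rw [hexp, hcoeff]
  exact deriv_mul_rpow_sub_mul_rpow_eq_zero_iff hχ hAp

/-- the derivative of the cloud payoff (as a function of the
revenue portion χ) vanishes at χ > 0 iff χ satisfies the first-order
condition. -/
theorem stmt_9 (k1 k2 fs φ P γ ψ α β a1 a2 a3 a4 : ℝ)
    (hk1 : 0 < k1) (hk2 : 0 < k2) (hfs : 0 < fs) (hφ : 0 < φ) (hP : 0 < P)
    (ha1 : a1 = γ - α * ψ) (ha2 : a2 = 1 - α * β)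
    (ha3 : a3 = ψ - γ * β) (ha4 : a4 = α * φ)
    (ha2ne : a2 ≠ 0) (ha42 : a4 + a2 ≠ 0) :
    ∀ χ : ℝ, 0 < χ →
      (deriv
          (fun x : ℝ =>
            (k1 * k2 ^ α) ^ (1 / a2) * P ^ (1 - a1 / a2) * x ^ (a4 / a2 + 1) -
              fs * (k2 * k1 ^ β) ^ (1 / a2) * P ^ (a3 / a2) * x ^ (φ / a2)) χ = 0 ↔
        χ ^ ((a4 - φ) / a2 + 1) =
          fs * (φ / (a4 + a2)) * ((k2 * k1 ^ β) / (k1 * k2 ^ α)) ^ (1 / a2) *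
            P ^ ((a1 + a3) / a2 - 1)) :=
  stmt_9_general k1 k2 fs φ P α β a1 a2 a3 a4 hk1 hk2 hP ha2ne ha42
end

section
/- Let k1, k2, f_s, φ > 0, let γ, ψ, α, β be real exponents, and set a1 = γ − αψ, a2 = 1 − αβ, a3 = ψ − γβ, a4 = αφ. Assume a2 > 0 and a4 + a2 > 0. Fix P > 0 and define π(χ) = (k1·k2^α)^{1/a2} · P^{1 − a1/a2} · χ^{a4/a2 + 1} − f_s · (k2·k1^β)^{1/a2} · P^{a3/a2} · χ^{φ/a2} for χ > 0. If χ* > 0 is a stationary point of π (i.e., π'(χ*) = 0), then the second derivative of π at χ* equals (k1·k2^α)^{1/a2} · ((a4 + a2)/a2) · P^{1 − a1/a2} · χ*^{a4/a2 − 1} · (a4 + a2 − φ)/a2; in particular π''(χ*) < 0 if and only if a4 + a2 − φ < 0. -/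
/-!
Write the payoff as `A * χ ^ p - B * χ ^ q` with `A > 0`, `p = (a4 + a2) / a2 > 0` and
`q = φ / a2`. At a stationary point `B q χ^(q-1) = A p χ^(p-1)`, so the `B`-term of the second
derivative can be traded for an `A`-term, giving `π''(χ) = A p (p - q) χ^(p-2)`, whose sign is
that of `p - q = (a4 + a2 - φ) / a2`.
-/

open Topology

section RpowDifference

variable (A B p q : ℝ) {x : ℝ}

theorem hasDerivAt_mul_rpow_sub_mul_rpow (hx : x ≠ 0) :
    HasDerivAt (fun x => A * x ^ p - B * x ^ q)
      (A * p * x ^ (p - 1) - B * q * x ^ (q - 1)) x := by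
  simpa only [mul_assoc] using
    ((Real.hasDerivAt_rpow_const (p := p) (Or.inl hx)).const_mul A).fun_sub
      ((Real.hasDerivAt_rpow_const (p := q) (Or.inl hx)).const_mul B)

theorem deriv_deriv_mul_rpow_sub_mul_rpow (hx : x ≠ 0) :
    deriv (deriv fun x => A * x ^ p - B * x ^ q) x =
      A * p * (p - 1) * x ^ (p - 2) - B * q * (q - 1) * x ^ (q - 2) := by
  have hderiv : deriv (fun x => A * x ^ p - B * x ^ q) =ᶠ[𝓝 x]
      fun x => A * p * x ^ (p - 1) - B * q * x ^ (q - 1) := by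
    filter_upwards [eventually_ne_nhds hx] with y hy
    exact (hasDerivAt_mul_rpow_sub_mul_rpow A B p q hy).deriv
  rw [hderiv.deriv_eq,
    (hasDerivAt_mul_rpow_sub_mul_rpow (A * p) (B * q) (p - 1) (q - 1) hx).deriv]
  simp only [sub_sub, one_add_one_eq_two, mul_assoc]

theorem deriv_deriv_mul_rpow_sub_mul_rpow_of_deriv_eq_zero (hx : x ≠ 0)
    (hcrit : deriv (fun x => A * x ^ p - B * x ^ q) x = 0) :
    deriv (deriv fun x => A * x ^ p - B * x ^ q) x = A * p * (p - q) * x ^ (p - 2) := by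
  have hpow (r : ℝ) : x ^ (r - 1) = x ^ (r - 2) * x := by
    rw [← Real.rpow_add_one hx]
    ring_nf
  have hbalance : B * q * x ^ (q - 2) = A * p * x ^ (p - 2) := by
    rw [(hasDerivAt_mul_rpow_sub_mul_rpow A B p q hx).deriv, hpow p, hpow q] at hcrit
    apply mul_right_cancel₀ hx
    linear_combination -hcrit
  rw [deriv_deriv_mul_rpow_sub_mul_rpow A B p q hx]
  linear_combination (1 - q) * hbalance

end RpowDifference

theorem stmt_11_general (k1 k2 fs φ P α β a1 a2 a3 a4 : ℝ)
    (hk1 : 0 < k1) (hk2 : 0 < k2) (hP : 0 < P)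
    (ha2pos : 0 < a2) (ha42 : 0 < a4 + a2) :
    let cloudPayoff : ℝ → ℝ := fun x =>
      (k1 * k2 ^ α) ^ (1 / a2) * P ^ (1 - a1 / a2) * x ^ (a4 / a2 + 1) -
        fs * (k2 * k1 ^ β) ^ (1 / a2) * P ^ (a3 / a2) * x ^ (φ / a2)
    ∀ χs : ℝ, 0 < χs → deriv cloudPayoff χs = 0 →
      deriv (deriv cloudPayoff) χs =
        (k1 * k2 ^ α) ^ (1 / a2) * ((a4 + a2) / a2) * P ^ (1 - a1 / a2) *
          χs ^ (a4 / a2 - 1) * ((a4 + a2 - φ) / a2) ∧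
      (deriv (deriv cloudPayoff) χs < 0 ↔ a4 + a2 - φ < 0) := by
  intro cloudPayoff χs hχs hcrit
  have hval : deriv (deriv cloudPayoff) χs =
      (k1 * k2 ^ α) ^ (1 / a2) * ((a4 + a2) / a2) * P ^ (1 - a1 / a2) *
        χs ^ (a4 / a2 - 1) * ((a4 + a2 - φ) / a2) := by
    rw [deriv_deriv_mul_rpow_sub_mul_rpow_of_deriv_eq_zero _ _ _ _ hχs.ne' hcrit,
      show a4 / a2 + 1 - 2 = a4 / a2 - 1 by ring]
    field_simp
  have hcoeff : 0 < (k1 * k2 ^ α) ^ (1 / a2) * ((a4 + a2) / a2) * P ^ (1 - a1 / a2) *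
      χs ^ (a4 / a2 - 1) := by
    positivity
  refine ⟨hval, ?_⟩
  rw [hval]
  simpa [div_lt_iff₀ ha2pos] using mul_lt_mul_iff_right₀ (b := (a4 + a2 - φ) / a2) (c := 0) hcoeff

/-- at a stationary point χ* of the cloud payoff, the second
derivative equals the stated closed form; in particular it is negative iff
a4 + a2 − φ < 0. -/
theorem stmt_11 (k1 k2 fs φ P γ ψ α β a1 a2 a3 a4 : ℝ)
    (hk1 : 0 < k1) (hk2 : 0 < k2) (hfs : 0 < fs) (hφ : 0 < φ) (hP : 0 < P)
    (ha1 : a1 = γ - α * ψ) (ha2 : a2 = 1 - α * β)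
    (ha3 : a3 = ψ - γ * β) (ha4 : a4 = α * φ)
    (ha2pos : 0 < a2) (ha42 : 0 < a4 + a2) :
    let cloudPayoff : ℝ → ℝ := fun x =>
      (k1 * k2 ^ α) ^ (1 / a2) * P ^ (1 - a1 / a2) * x ^ (a4 / a2 + 1) -
        fs * (k2 * k1 ^ β) ^ (1 / a2) * P ^ (a3 / a2) * x ^ (φ / a2)
    ∀ χs : ℝ, 0 < χs → deriv cloudPayoff χs = 0 →
      deriv (deriv cloudPayoff) χs =
        (k1 * k2 ^ α) ^ (1 / a2) * ((a4 + a2) / a2) * P ^ (1 - a1 / a2) *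
          χs ^ (a4 / a2 - 1) * ((a4 + a2 - φ) / a2) ∧
      (deriv (deriv cloudPayoff) χs < 0 ↔ a4 + a2 - φ < 0) :=
  stmt_11_general k1 k2 fs φ P α β a1 a2 a3 a4 hk1 hk2 hP ha2pos ha42
end

section
/- Let k1, k2, f_c > 0, let χ ∈ (0,1), let γ, ψ, α, β, φ be real exponents, and set a1 = γ − αψ, a2 = 1 − αβ, a4 = αφ. Assume a2 > 0 and a1 > a2. Define D_c(P) = (k1 · k2^α · P^{−a1} · χ^{a4})^{1/a2} and π_i(P) = (P·(1−χ) − f_c) · D_c(P) for P > 0. Then π_i(P) tends to −∞ as P tends to 0 from the right, and π_i(P) tends to 0 as P tends to +∞. -/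
/-!
Writing `C = k1 · k2^α · χ^{a4} > 0`, the demand is `D_c(P) = C^{1/a2} · P^e` with `e = -a1/a2 < -1`.
Near `0` the margin `P(1-χ) - f_c` tends to `-f_c < 0` while `P^e → ∞`, so the payoff goes to `-∞`;
near `∞` the payoff is `(1-χ) C^{1/a2} P^{e+1} - f_c C^{1/a2} P^e`, and both exponents are negative.
-/

open Filter Real Topology

lemma mul_rpow_rpow_eq {C x : ℝ} (hC : 0 ≤ C) (hx : 0 ≤ x) (s t : ℝ) :
    (C * x ^ s) ^ t = C ^ t * x ^ (s * t) := by
  rw [mul_rpow hC (rpow_nonneg hx s), rpow_mul hx]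

lemma tendsto_sub_mul_rpow_nhdsGT_zero_atBot (m : ℝ) {b e : ℝ} (hb : 0 < b) (he : e < 0) :
    Tendsto (fun x : ℝ => (x * m - b) * x ^ e) (𝓝[>] 0) atBot := by
  have hmargin : Tendsto (fun x : ℝ => x * m - b) (𝓝[>] 0) (𝓝 (-b)) := by
    have : Tendsto (fun x : ℝ => x * m - b) (𝓝 0) (𝓝 (0 * m - b)) :=
      (tendsto_id.mul_const m).sub_const b
    simpa using this.mono_left nhdsWithin_le_nhds
  exact hmargin.neg_mul_atTop (neg_lt_zero.2 hb) (tendsto_rpow_neg_nhdsGT_zero he)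

lemma tendsto_sub_mul_rpow_atTop_zero (m b : ℝ) {e : ℝ} (he : e < -1) :
    Tendsto (fun x : ℝ => (x * m - b) * x ^ e) atTop (𝓝 0) := by
  have hpow : ∀ {y : ℝ}, y < 0 → Tendsto (fun x : ℝ => x ^ y) atTop (𝓝 0) := fun {y} hy => by
    simpa using tendsto_rpow_neg_atTop (neg_pos.2 hy)
  have hlim := ((hpow (by linarith : e + 1 < 0)).const_mul m).sub ((hpow (by linarith)).const_mul b)
  rw [mul_zero, mul_zero, sub_zero] at hlim
  refine hlim.congr' ?_
  filter_upwards [eventually_gt_atTop 0] with x hx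
  rw [rpow_add_one hx.ne']
  ring

theorem stmt_15_general (k1 k2 fc χ α a1 a2 a4 : ℝ)
    (hk1 : 0 < k1) (hk2 : 0 < k2) (hfc : 0 < fc) (hχ : χ ∈ Set.Ioo (0 : ℝ) 1)
    (ha2pos : 0 < a2) (ha1a2 : a2 < a1) :
    let pi_i : ℝ → ℝ :=
      fun Q => (Q * (1 - χ) - fc) * (k1 * k2 ^ α * Q ^ (-a1) * χ ^ a4) ^ (1 / a2)
    Filter.Tendsto pi_i (nhdsWithin 0 (Set.Ioi 0)) Filter.atBot ∧
      Filter.Tendsto pi_i Filter.atTop (nhds 0) := by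
  intro pi_i
  set C := k1 * k2 ^ α * χ ^ a4
  have hC : 0 < C := by have := hχ.1; positivity
  have he : -a1 * (1 / a2) < -1 := by
    rw [neg_mul, ← div_eq_mul_one_div, neg_lt_neg_iff, one_lt_div ha2pos]
    exact ha1a2
  have hpi : Set.EqOn (fun Q => C ^ (1 / a2) * ((Q * (1 - χ) - fc) * Q ^ (-a1 * (1 / a2))))
      pi_i (Set.Ioi 0) := fun Q hQ => by
    simp only [pi_i, show k1 * k2 ^ α * Q ^ (-a1) * χ ^ a4 = C * Q ^ (-a1) by ring,
      mul_rpow_rpow_eq hC.le (le_of_lt hQ)]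
    ring
  constructor
  · exact ((tendsto_sub_mul_rpow_nhdsGT_zero_atBot _ hfc (by linarith)).const_mul_atBot
      (rpow_pos_of_pos hC _)).congr' (eventuallyEq_nhdsWithin_of_eqOn hpi)
  · simpa using ((tendsto_sub_mul_rpow_atTop_zero (1 - χ) fc he).const_mul (C ^ (1 / a2))).congr'
      (eventuallyEq_of_mem (Ioi_mem_atTop 0) hpi)

/-- the service provider payoff tends to −∞ as the price tends
to 0 from the right, and tends to 0 as the price tends to +∞. -/
theorem stmt_15 (k1 k2 fc χ γ ψ α β φ a1 a2 a4 : ℝ)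
    (hk1 : 0 < k1) (hk2 : 0 < k2) (hfc : 0 < fc) (hχ : χ ∈ Set.Ioo (0 : ℝ) 1)
    (ha1 : a1 = γ - α * ψ) (ha2 : a2 = 1 - α * β) (ha4 : a4 = α * φ)
    (ha2pos : 0 < a2) (ha1a2 : a2 < a1) :
    let pi_i : ℝ → ℝ :=
      fun Q => (Q * (1 - χ) - fc) * (k1 * k2 ^ α * Q ^ (-a1) * χ ^ a4) ^ (1 / a2)
    Filter.Tendsto pi_i (nhdsWithin 0 (Set.Ioi 0)) Filter.atBot ∧
      Filter.Tendsto pi_i Filter.atTop (nhds 0) :=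
  stmt_15_general k1 k2 fc χ α a1 a2 a4 hk1 hk2 hfc hχ ha2pos ha1a2
end
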